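/- arXiv:2208.11976 — 5 statements merged into one kernel-verified Lean document; each statement's English description precedes it below -/
import Mathlib

section
/- For x ∈ [1/2, 1) and k ∈ ℕ, define u_k(x) = λ^(k)(x)/(k+1)! where λ(x) = ln(x) − ln(1−x), with u_0(x) = λ(x). Then for every k ≥ 1, u_{2k}(x) ≤ u_{2k+1}(x). -/
open Real

/-- λ(x) = ln x − ln(1−x). -/
noncomputable def lam (x : ℝ) : ℝ := Real.log x - Real.log (1 - x)

/-- u_k(x) = λ⁽ᵏ⁾(x)/(k+1)!, with u_0 = λ. -/
noncomputable def u (k : ℕ) (x : ℝ) : ℝ := iteratedDeriv k lam x / (Nat.factorial (k + 1) : ℝ)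

lemma zpow_key (k : ℕ) : ∀ (y:ℝ), y ^ (-(k:ℤ) - 1) = (y^(k+1))⁻¹ := by
  intro y
  rw [show -(k:ℤ)-1 = -((k+1:ℕ):ℤ) by push_cast; ring, zpow_neg, zpow_natCast]

lemma inv_pow_deriv (k : ℕ) (y : ℝ) (hy : y ≠ 0) :
    HasDerivAt (fun t : ℝ => (t^k)⁻¹) (-(k:ℝ) * (y^(k+1))⁻¹) y := by
  have h := hasDerivAt_zpow (-(k:ℤ)) y (Or.inl hy)
  push_cast at h
  have h' : HasDerivAt (fun t : ℝ => (t^k)⁻¹) (-(k:ℝ) * y ^ (-(k:ℤ) - 1)) y := by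
    apply h.congr_of_eventuallyEq
    filter_upwards [isOpen_ne.mem_nhds hy] with t ht
    rw [zpow_neg, zpow_natCast]
  rw [zpow_key] at h'
  exact h'

lemma lam_iter (k : ℕ) (hk : 1 ≤ k) :
    ∀ x ∈ Set.Ioo (0:ℝ) 1, iteratedDeriv k lam x =
      (Nat.factorial (k-1) : ℝ) * ((-1)^(k+1) * (x^k)⁻¹ + ((1-x)^k)⁻¹) := by
  induction k, hk using Nat.le_induction with
  | base =>
    intro x hx
    have hx0 : x ≠ 0 := ne_of_gt hx.1
    have hx1 : (1:ℝ) - x ≠ 0 := by have := hx.2; linarith [hx.2]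
    have h1 : HasDerivAt lam (x⁻¹ + (1-x)⁻¹) x := by
      have ha : HasDerivAt Real.log x⁻¹ x := Real.hasDerivAt_log hx0
      have hb : HasDerivAt (fun y : ℝ => 1 - y) (-1) x := by
        simpa using (hasDerivAt_id x).const_sub 1
      have hc : HasDerivAt (fun y : ℝ => Real.log (1 - y)) ((1-x)⁻¹ * (-1)) x :=
        (Real.hasDerivAt_log hx1).comp x hb
      have hd := ha.sub hc
      have : x⁻¹ - (1-x)⁻¹ * (-1) = x⁻¹ + (1-x)⁻¹ := by ring
      rw [this] at hd
      exact hd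
    rw [iteratedDeriv_one, h1.deriv]
    simp
  | succ k hk ih =>
    intro x hx
    have hx0 : x ≠ 0 := ne_of_gt hx.1
    have hx1 : (1:ℝ) - x ≠ 0 := by have := hx.2; linarith [hx.2]
    rw [iteratedDeriv_succ]
    have hev : iteratedDeriv k lam =ᶠ[nhds x]
        (fun y => (Nat.factorial (k-1) : ℝ) * ((-1)^(k+1) * (y^k)⁻¹ + ((1-y)^k)⁻¹)) := by
      filter_upwards [isOpen_Ioo.mem_nhds hx] with y hy using ih y hy
    rw [hev.deriv_eq]
    have h1 := inv_pow_deriv k x hx0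
    have h2 : HasDerivAt (fun y : ℝ => ((1-y)^k)⁻¹) ((k:ℝ) * ((1-x)^(k+1))⁻¹) x := by
      have hb : HasDerivAt (fun y : ℝ => 1 - y) (-1) x := by
        simpa using (hasDerivAt_id x).const_sub 1
      have h1' : HasDerivAt (fun y : ℝ => ((1-y)^k)⁻¹) (-(k:ℝ) * ((1-x)^(k+1))⁻¹ * -1) x :=
        (inv_pow_deriv k (1-x) hx1).comp x hb
      convert h1' using 1
      ring
    have h3 : HasDerivAt
        (fun y => (Nat.factorial (k-1) : ℝ) * ((-1)^(k+1) * (y^k)⁻¹ + ((1-y)^k)⁻¹))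
        ((Nat.factorial (k-1) : ℝ) * ((-1)^(k+1) * (-(k:ℝ) * (x^(k+1))⁻¹) + (k:ℝ) * ((1-x)^(k+1))⁻¹)) x :=
      (((h1.const_mul _).add h2).const_mul _)
    rw [h3.deriv]
    have hfac : (Nat.factorial (k+1-1) : ℝ) = (k:ℝ) * (Nat.factorial (k-1) : ℝ) := by
      rw [Nat.add_sub_cancel, ← Nat.mul_factorial_pred (by omega : k ≠ 0)]
      push_cast; ring
    rw [hfac]
    ring

set_option maxHeartbeats 800000 in
theorem stmt6 (k : ℕ) (hk : 1 ≤ k) (x : ℝ) (hx : x ∈ Set.Ico (1 / 2 : ℝ) 1) :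
    u (2 * k) x ≤ u (2 * k + 1) x := by
  obtain ⟨hxl, hxu⟩ := hx
  have hx0 : (0:ℝ) < x := by linarith
  have h1x : (0:ℝ) < 1 - x := by linarith
  have hmem : x ∈ Set.Ioo (0:ℝ) 1 := ⟨hx0, hxu⟩
  obtain ⟨m, hm, hm1⟩ : ∃ m, 2*k = m+1 ∧ 1 ≤ m := ⟨2*k-1, by omega, by omega⟩
  have e1 := lam_iter (2*k) (by omega) x hmem
  have e2 := lam_iter (2*k+1) (by omega) x hmem
  rw [u, u, e1, e2, hm]
  simp only [Nat.add_sub_cancel]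
  have hodd2 : ((-1:ℝ))^(m+1+1) = -1 := by
    have hmodd : Odd (m+1+1) := by
      obtain ⟨t, ht⟩ : Odd m := ⟨k-1, by omega⟩
      exact ⟨t+1, by omega⟩
    exact hmodd.neg_one_pow
  have heven : ((-1:ℝ))^(m+1+1+1) = 1 := by
    have hmev : Even (m+1+1+1) := by
      obtain ⟨t, ht⟩ : Odd m := ⟨k-1, by omega⟩
      exact ⟨t+2, by omega⟩
    exact hmev.neg_one_pow
  rw [hodd2, heven]
  have f2 : (Nat.factorial (m+1+1) : ℝ) = ((m:ℝ)+2)*((m:ℝ)+1)*(Nat.factorial m : ℝ) := by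
    rw [Nat.factorial_succ, Nat.factorial_succ]; push_cast; ring
  have f3 : (Nat.factorial (m+1+1+1) : ℝ) = ((m:ℝ)+3)*((m:ℝ)+2)*((m:ℝ)+1)*(Nat.factorial m : ℝ) := by
    rw [Nat.factorial_succ, Nat.factorial_succ, Nat.factorial_succ]; push_cast; ring
  have f1 : (Nat.factorial (m+1) : ℝ) = ((m:ℝ)+1)*(Nat.factorial m : ℝ) := by
    rw [Nat.factorial_succ]; push_cast; ring
  rw [f1, f2, f3]
  have pa : (x^(m+1+1))⁻¹ = (x^(m+1))⁻¹ * x⁻¹ := by rw [pow_succ, mul_inv]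
  have pb : ((1-x)^(m+1+1))⁻¹ = ((1-x)^(m+1))⁻¹ * (1-x)⁻¹ := by rw [pow_succ, mul_inv]
  rw [pa, pb]
  set F : ℝ := (Nat.factorial m : ℝ) with hF
  set a : ℝ := ((1-x)^(m+1))⁻¹ with ha'
  set c : ℝ := (x^(m+1))⁻¹ with hc'
  set N : ℝ := (m:ℝ) with hN'
  have hFp : 0 < F := by positivity
  have hap : 0 < a := by positivity
  have hcp : 0 < c := by positivity
  have hXp : 0 < x⁻¹ := by positivity
  have hN1 : 1 ≤ N := by rw [hN']; exact_mod_cast hm1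
  have hT : (2:ℝ) ≤ (1-x)⁻¹ := by
    rw [show (2:ℝ) = (1/2:ℝ)⁻¹ by norm_num]
    gcongr
    linarith
  have hb : 2*a ≤ a * (1-x)⁻¹ := by nlinarith
  rw [div_le_div_iff₀ (by positivity) (by positivity)]
  have h1 : (a-c)*(N+3) ≤ (N+1)*(c*x⁻¹+a*(1-x)⁻¹) := by
    nlinarith [mul_nonneg (mul_nonneg hap.le (by linarith : (0:ℝ) ≤ (1-x)⁻¹-2)) (by linarith : (0:ℝ) ≤ N+1),
      mul_nonneg (mul_nonneg hcp.le hXp.le) (by linarith : (0:ℝ) ≤ N+1),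
      mul_nonneg hap.le (by linarith : (0:ℝ) ≤ N-1),
      mul_nonneg hcp.le (by linarith : (0:ℝ) ≤ N+3)]
  nlinarith [mul_le_mul_of_nonneg_right h1 (by positivity : (0:ℝ) ≤ F*F*(N+2)*(N+1))]
end

section
/- For all k ≥ 2 and x ∈ [1/2, 1), u_{k+2}(x) ≥ u_k(x), where u_k(x) = λ^(k)(x)/(k+1)! and λ(x) = ln x − ln(1−x). -/
/-!
On `(0, 1)` the derivatives of `λ` are `λ⁽ᵏ⁾(x) = (k-1)! ((-1)^(k+1) a^k + b^k)` with `a = 1/x`,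
`b = 1/(1-x)`, so `u_k = ((-1)^(k+1) a^k + b^k) / (k (k+1))`. For `x ∈ [1/2, 1)` we have
`1 ≤ a ≤ 2 ≤ b`, hence `b^(k+2) ≥ 4 b^k`, `a^(k+2) ≥ a^k` and `b^(k+2) - a^(k+2) ≥ 4 (b^k - a^k)`.
The claim then reduces to `(k+2)(k+3) ≤ 4 k (k+1)` for even `k`, and to `3k² - 5k - 12 ≥ 0`,
i.e. `k ≥ 3`, for odd `k`.
-/

open Real

theorem Real.iteratedDeriv_succ_log (n : ℕ) (x : ℝ) :
    iteratedDeriv (n + 1) log x = (-1) ^ n * n.factorial * x⁻¹ ^ (n + 1) := by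
  rw [iteratedDeriv_succ', deriv_log', iteratedDeriv_eq_iterate, iter_deriv_inv,
    show (-1 - n : ℤ) = -↑(n + 1) by push_cast; ring, zpow_neg, zpow_natCast, inv_pow]

theorem iteratedDeriv_succ_lam (n : ℕ) {x : ℝ} (hx : x ∈ Set.Ioo 0 1) :
    iteratedDeriv (n + 1) lam x = n.factorial * ((-1) ^ n * x⁻¹ ^ (n + 1) + (1 - x)⁻¹ ^ (n + 1)) := by
  have hlog : ContDiffAt ℝ (n + 1) log x := contDiffAt_log.2 hx.1.ne'
  have hlog_sub : ContDiffAt ℝ (n + 1) (fun y ↦ log (1 - y)) x :=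
    (contDiffAt_log.2 (sub_pos.2 hx.2).ne').comp x (contDiffAt_const.sub contDiffAt_id)
  rw [show lam = fun y ↦ log y - log (1 - y) from rfl, iteratedDeriv_fun_sub hlog hlog_sub,
    iteratedDeriv_comp_const_sub]
  dsimp only
  rw [Real.iteratedDeriv_succ_log, Real.iteratedDeriv_succ_log, smul_eq_mul]
  have hsign : ((-1 : ℝ) ^ n) ^ 2 = 1 := by rw [← pow_mul, pow_mul', neg_one_sq, one_pow]
  linear_combination (n.factorial * (1 - x)⁻¹ ^ (n + 1)) * hsign

theorem u_eq_of_mem_Ioo {k : ℕ} (hk : 1 ≤ k) {x : ℝ} (hx : x ∈ Set.Ioo 0 1) :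
    u k x = ((-1) ^ (k + 1) * x⁻¹ ^ k + (1 - x)⁻¹ ^ k) / (k * (k + 1)) := by
  obtain ⟨n, rfl⟩ : ∃ n, k = n + 1 := ⟨k - 1, by omega⟩
  rw [u, iteratedDeriv_succ_lam n hx, Nat.factorial_succ, Nat.factorial_succ]
  have : (n.factorial : ℝ) ≠ 0 := by positivity
  push_cast
  field_simp
  ring

theorem four_mul_sub_pow_le {a b : ℝ} (ha : 0 ≤ a) (hab : a ≤ b) (hb : 2 ≤ b) (n : ℕ) :
    4 * (b ^ n - a ^ n) ≤ b ^ (n + 2) - a ^ (n + 2) := by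
  have hpow : a ^ n ≤ b ^ n := pow_le_pow_left₀ ha hab n
  have hsq : a ^ 2 ≤ b ^ 2 := pow_le_pow_left₀ ha hab 2
  have : (4 : ℝ) ≤ b ^ 2 := by nlinarith
  calc 4 * (b ^ n - a ^ n) ≤ b ^ 2 * (b ^ n - a ^ n) + (b ^ 2 - a ^ 2) * a ^ n := by
        nlinarith [pow_nonneg ha n]
    _ = b ^ (n + 2) - a ^ (n + 2) := by ring

theorem pow_add_four_mul_pow_le {a b : ℝ} (ha : 1 ≤ a) (hb : 2 ≤ b) (n : ℕ) :
    a ^ n + 4 * b ^ n ≤ a ^ (n + 2) + b ^ (n + 2) := by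
  have : a ^ n ≤ a ^ (n + 2) := pow_le_pow_right₀ ha (by omega)
  have : (4 : ℝ) ≤ b ^ 2 := by nlinarith
  rw [pow_add b]
  nlinarith [pow_nonneg (by linarith : (0 : ℝ) ≤ b) n]

theorem signed_pow_add_pow_div_le {n : ℕ} (hn : 2 ≤ n) {a b : ℝ} (ha : 1 ≤ a) (hab : a ≤ b)
    (hb : 2 ≤ b) :
    ((-1) ^ (n + 1) * a ^ n + b ^ n) / (n * (n + 1)) ≤
      ((-1) ^ (n + 1) * a ^ (n + 2) + b ^ (n + 2)) / ((n + 2) * (n + 3)) := by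
  have hN : (2 : ℝ) ≤ n := by exact_mod_cast hn
  have hpow : a ^ n ≤ b ^ n := pow_le_pow_left₀ (by linarith) hab n
  have ha0 : 0 ≤ a ^ n := pow_nonneg (by linarith) n
  rw [div_le_div_iff₀ (by positivity) (by positivity)]
  rcases Nat.even_or_odd n with hev | hodd
  · rw [(hev.add_one).neg_one_pow]
    have hsub := four_mul_sub_pow_le (by linarith) hab hb n
    nlinarith [mul_le_mul_of_nonneg_left hsub (by positivity : (0 : ℝ) ≤ n * (n + 1)),
      mul_nonneg (sub_nonneg.2 hpow) (by nlinarith : (0 : ℝ) ≤ 3 * n ^ 2 - n - 6)]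
  · rw [(hodd.add_one).neg_one_pow]
    have hN3 : (3 : ℝ) ≤ n := by
      have : 3 ≤ n := by rcases hodd with ⟨j, rfl⟩; omega
      exact_mod_cast this
    have hsum := pow_add_four_mul_pow_le ha hb n
    nlinarith [mul_le_mul_of_nonneg_left hsum (by positivity : (0 : ℝ) ≤ n * (n + 1)),
      mul_nonneg (sub_nonneg.2 hpow) (by nlinarith : (0 : ℝ) ≤ 3 * n ^ 2 - n - 6),
      mul_nonneg ha0 (by nlinarith : (0 : ℝ) ≤ 3 * n ^ 2 - 5 * n - 12)]

theorem stmt8 (k : ℕ) (hk : 2 ≤ k) (x : ℝ) (hx : x ∈ Set.Ico (1 / 2 : ℝ) 1) :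
    u k x ≤ u (k + 2) x := by
  have hx_mem : x ∈ Set.Ioo 0 1 := ⟨by linarith [hx.1], hx.2⟩
  have ha : 1 ≤ x⁻¹ := one_le_inv₀ hx_mem.1 |>.2 hx.2.le
  have hb : 2 ≤ (1 - x)⁻¹ := by
    rw [le_inv_comm₀ two_pos (by linarith [hx.2])]; linarith [hx.1]
  have hab : x⁻¹ ≤ (1 - x)⁻¹ := by
    refine le_trans ?_ hb
    rw [inv_le_comm₀ hx_mem.1 two_pos]; linarith [hx.1]
  rw [u_eq_of_mem_Ioo (by omega) hx_mem, u_eq_of_mem_Ioo (by omega) hx_mem, pow_add (-1 : ℝ) (k + 1) 2]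
  push_cast
  convert signed_pow_add_pow_div_le hk ha hab hb using 2 <;> ring
end

section
/- Let r(k) = max(5, 2·⌈(k−1)/2⌉ + 1), u_k(x) = λ^(k)(x)/(k+1)! with λ(x) = ln x − ln(1−x). Then for all x ∈ [1/2, 1), k ∈ ℕ, and k' ∈ {0, 1, ..., k}: 0 ≤ min(u_0(x), u_1(x)) ≤ u_{k'}(x) ≤ u_{r(k)}(x). -/
/-!
Put `a = x⁻¹` and `b = (1 - x)⁻¹`, so that `a * b = a + b` and `1 ≤ a ≤ b` with `2 ≤ b` on `[1/2, 1)`.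
For `n ≥ 1`, `u n x = ((-1) ^ (n + 1) * a ^ n + b ^ n) / (n * (n + 1))`, which lies between
`(b ^ n - a ^ n) / (n * (n + 1))` and the majorant `(a ^ n + b ^ n) / (n * (n + 1))`, with equality
on the right for odd `n`. The lower bound exceeds `b - 2 ≥ log (b - 1) = u 0 x` once `n ≥ 2`.
The majorant is nondecreasing from `n = 4` on, and its values at `n = 1, 2, 3` lie below its value
at `5`: with `s = a + b = a * b ≥ 4` these are polynomial inequalities in `s`. As `r k` is odd,
`r k ≥ 5` and `r k ≥ k`, this gives the upper bound `u (r k) x`.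
-/

open Real

/-- r(k) = max(5, 2⌈(k−1)/2⌉ + 1); for natural k, ⌈(k−1)/2⌉ = ⌊k/2⌋. -/
def r (k : ℕ) : ℕ := max 5 (2 * (k / 2) + 1)

open Set
open scoped Nat

noncomputable def majorant (a b : ℝ) (n : ℕ) : ℝ := (a ^ n + b ^ n) / (n * (n + 1))

section
variable {a b : ℝ}

lemma majorant_le_majorant_succ (h1a : 1 ≤ a) (hab : a ≤ b) (h2b : 2 ≤ b) {n : ℕ} (hn : 4 ≤ n) :
    majorant a b n ≤ majorant a b (n + 1) := by
  have hn' : (4 : ℝ) ≤ n := by exact_mod_cast hn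
  have ha : a ^ n ≤ a ^ (n + 1) := pow_le_pow_right₀ h1a n.le_succ
  have hb : 2 * b ^ n ≤ b ^ (n + 1) := by
    rw [pow_succ']; exact mul_le_mul_of_nonneg_right h2b (by positivity)
  have hab' : a ^ n ≤ b ^ n := pow_le_pow_left₀ (by linarith) hab n
  have key : (n + 2) * (a ^ n + b ^ n) ≤ n * (a ^ (n + 1) + b ^ (n + 1)) := by
    nlinarith [mul_le_mul_of_nonneg_left ha (by positivity : (0 : ℝ) ≤ n),
      mul_le_mul_of_nonneg_left hb (by positivity : (0 : ℝ) ≤ n),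
      mul_nonneg (by linarith : (0 : ℝ) ≤ n - 4) (by positivity : (0 : ℝ) ≤ b ^ n)]
  unfold majorant
  rw [div_le_div_iff₀ (by positivity) (by positivity)]
  push_cast
  linarith [mul_le_mul_of_nonneg_left key (by positivity : (0 : ℝ) ≤ n + 1)]

lemma majorant_le_majorant_five (hprod : a * b = a + b) (hs : 4 ≤ a + b) {n : ℕ}
    (hn : n ≠ 0) (hn3 : n ≤ 3) : majorant a b n ≤ majorant a b 5 := by
  set s := a + b
  have h2 : a ^ 2 + b ^ 2 = s ^ 2 - 2 * s := by linear_combination (-2) * hprod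
  have h3 : a ^ 3 + b ^ 3 = s ^ 3 - 3 * s ^ 2 := by linear_combination (-3 * s) * hprod
  have h5 : a ^ 5 + b ^ 5 = s ^ 5 - 5 * s ^ 4 + 5 * s ^ 3 := by
    linear_combination (-5 * s ^ 3 + 5 * s * (a * b + s)) * hprod
  have ht : 0 ≤ s - 4 := by linarith
  have := Nat.pos_of_ne_zero hn
  unfold majorant
  interval_cases n <;> norm_num [h2, h3, h5] <;> rw [div_le_div_iff₀ (by norm_num) (by norm_num)]
    <;> nlinarith [pow_nonneg ht 2, pow_nonneg ht 3, pow_nonneg ht 4]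

lemma majorant_le_majorant (hprod : a * b = a + b) (h1a : 1 ≤ a) (hab : a ≤ b) (h2b : 2 ≤ b)
    {n m : ℕ} (hn : n ≠ 0) (hnm : n ≤ m) (hm : 5 ≤ m) : majorant a b n ≤ majorant a b m := by
  have hmono : MonotoneOn (majorant a b) (Ici 4) :=
    monotoneOn_nat_Ici_of_le_succ fun _ ↦ majorant_le_majorant_succ h1a hab h2b
  rcases le_or_gt 4 n with h4n | hn4
  · exact hmono h4n (h4n.trans hnm) hnm
  · exact (majorant_le_majorant_five hprod (by nlinarith) hn (by omega)).trans
      (hmono (by simp) (by simp; omega) hm)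

lemma mul_sub_two_le_pow_sub_pow (hprod : a * b = a + b) (ha : 0 ≤ a) (hab : a ≤ b)
    (h2b : 2 ≤ b) {n : ℕ} (hn : 2 ≤ n) : n * (n + 1) * (b - 2) ≤ b ^ n - a ^ n := by
  induction n, hn using Nat.le_induction with
  | base =>
    have hb1 : a * (b - 1) = b := by linear_combination hprod
    have hexpand : (b ^ 2 - a ^ 2 - 6 * (b - 2)) * (b - 1) ^ 2 = (b - 2) * ((b - 2) ^ 3 + 2) := by
      linear_combination (-(a * (b - 1) + b)) * hb1
    have hpos : 0 ≤ (b - 2) * ((b - 2) ^ 3 + 2) := by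
      have : 0 ≤ b - 2 := by linarith
      positivity
    push_cast
    nlinarith [sq_nonneg (b - 1)]
  | succ n hn ih =>
    have hn2 : (2 : ℝ) ≤ n := by exact_mod_cast hn
    have hb2 : 0 ≤ b - 2 := by linarith
    push_cast
    calc ((n : ℝ) + 1) * (n + 1 + 1) * (b - 2)
        ≤ 2 * (n * (n + 1) * (b - 2)) := by
          linarith [mul_nonneg (mul_nonneg (sub_nonneg.2 hn2) (by positivity : (0 : ℝ) ≤ n + 1)) hb2]
      _ ≤ b * (n * (n + 1) * (b - 2)) := by gcongr
      _ ≤ b * (b ^ n - a ^ n) := by gcongr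
      _ ≤ b ^ (n + 1) - a ^ (n + 1) := by
        rw [pow_succ, pow_succ]
        nlinarith [mul_le_mul_of_nonneg_left hab (pow_nonneg ha n)]

end

lemma hasDerivAt_lam {x : ℝ} (hx : x ∈ Ioo (0 : ℝ) 1) :
    HasDerivAt lam (x⁻¹ + (1 - x)⁻¹) x := by
  have h : HasDerivAt (fun y ↦ Real.log y - Real.log (1 - y)) (x⁻¹ - -1 / (1 - x)) x :=
    (hasDerivAt_log hx.1.ne').sub (((hasDerivAt_id' x).const_sub 1).log (sub_pos.2 hx.2).ne')
  exact h.congr_deriv (by ring)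

lemma iteratedDeriv_succ_lam_s10 (k : ℕ) {x : ℝ} (hx : x ∈ Ioo (0 : ℝ) 1) :
    iteratedDeriv (k + 1) lam x = k ! * (-1) ^ k / x ^ (k + 1) + k ! / (1 - x) ^ (k + 1) := by
  have hx0 : x ≠ 0 := hx.1.ne'
  have hx1 : 1 - x ≠ 0 := (sub_pos.2 hx.2).ne'
  have hderiv : EqOn (deriv lam) (fun y ↦ y⁻¹ + (1 - y)⁻¹) (Ioo 0 1) :=
    fun y hy ↦ (hasDerivAt_lam hy).deriv
  rw [iteratedDeriv_succ', hderiv.iteratedDeriv_of_isOpen isOpen_Ioo k hx,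
    iteratedDeriv_fun_add (f := Inv.inv) (g := fun y ↦ (1 - y)⁻¹) (contDiffAt_inv ℝ hx0)
      ((contDiffAt_inv ℝ hx1).comp x (contDiffAt_const.sub contDiffAt_id)),
    iteratedDeriv_comp_const_sub k (Inv.inv : ℝ → ℝ) 1, iteratedDeriv_eq_iterate]
  beta_reduce
  have hexp : (-1 - k : ℤ) = -((k + 1 : ℕ) : ℤ) := by push_cast; ring
  rw [iter_deriv_inv, iter_deriv_inv, smul_eq_mul, ← mul_assoc, ← mul_assoc, ← mul_pow, hexp,
    zpow_neg, zpow_neg, zpow_natCast, zpow_natCast]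
  norm_num
  ring

lemma u_eq {n : ℕ} (hn : n ≠ 0) {x : ℝ} (hx : x ∈ Ioo (0 : ℝ) 1) :
    u n x = ((-1) ^ (n + 1) * x⁻¹ ^ n + (1 - x)⁻¹ ^ n) / (n * (n + 1)) := by
  obtain ⟨k, rfl⟩ := Nat.exists_eq_add_one_of_ne_zero hn
  have hx0 : x ≠ 0 := hx.1.ne'
  have hx1 : 1 - x ≠ 0 := (sub_pos.2 hx.2).ne'
  rw [u, iteratedDeriv_succ_lam_s10 k hx, Nat.factorial_succ, Nat.factorial_succ, inv_pow, inv_pow]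
  push_cast
  field_simp
  ring

lemma u_zero (x : ℝ) : u 0 x = lam x := by
  simp [u]

lemma lam_nonneg {x : ℝ} (hx : x ∈ Ico (1 / 2 : ℝ) 1) : 0 ≤ lam x :=
  sub_nonneg.2 (log_le_log (by linarith [hx.2]) (by linarith [hx.1]))

lemma lam_le_inv_one_sub_sub_two {x : ℝ} (hx : x ∈ Ioo (0 : ℝ) 1) : lam x ≤ (1 - x)⁻¹ - 2 := by
  have hx1 : 0 < 1 - x := sub_pos.2 hx.2
  have hratio : x / (1 - x) = (1 - x)⁻¹ - 1 := by field_simp; ring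
  rw [lam, ← log_div hx.1.ne' hx1.ne', hratio]
  linarith [log_le_sub_one_of_pos (x := (1 - x)⁻¹ - 1) (hratio ▸ div_pos hx.1 hx1)]

lemma inv_mul_inv_one_sub {x : ℝ} (hx : x ∈ Ioo (0 : ℝ) 1) :
    x⁻¹ * (1 - x)⁻¹ = x⁻¹ + (1 - x)⁻¹ := by
  have hx0 : x ≠ 0 := hx.1.ne'
  have hx1 : 1 - x ≠ 0 := (sub_pos.2 hx.2).ne'
  field_simp
  ring

lemma inv_le_inv_one_sub {x : ℝ} (hx : x ∈ Ico (1 / 2 : ℝ) 1) : x⁻¹ ≤ (1 - x)⁻¹ :=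
  inv_anti₀ (by linarith [hx.2]) (by linarith [hx.1])

lemma two_le_inv_one_sub {x : ℝ} (hx : x ∈ Ico (1 / 2 : ℝ) 1) : 2 ≤ (1 - x)⁻¹ := by
  rw [le_inv_comm₀ two_pos (by linarith [hx.2])]
  linarith [hx.1]

lemma u_le_majorant {n : ℕ} (hn : n ≠ 0) {x : ℝ} (hx : x ∈ Ioo (0 : ℝ) 1) :
    u n x ≤ majorant x⁻¹ (1 - x)⁻¹ n := by
  rw [u_eq hn hx, majorant]
  gcongr
  calc (-1) ^ (n + 1) * x⁻¹ ^ n ≤ |(-1) ^ (n + 1) * x⁻¹ ^ n| := le_abs_self _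
    _ = x⁻¹ ^ n := by simp [abs_of_pos hx.1]

lemma u_eq_majorant {n : ℕ} (hn : Odd n) {x : ℝ} (hx : x ∈ Ioo (0 : ℝ) 1) :
    u n x = majorant x⁻¹ (1 - x)⁻¹ n := by
  rw [u_eq hn.pos.ne' hx, majorant, hn.add_one.neg_one_pow, one_mul]

lemma pow_sub_pow_div_le_u {n : ℕ} (hn : n ≠ 0) {x : ℝ} (hx : x ∈ Ioo (0 : ℝ) 1) :
    ((1 - x)⁻¹ ^ n - x⁻¹ ^ n) / (n * (n + 1)) ≤ u n x := by
  rw [u_eq hn hx]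
  gcongr
  rw [sub_eq_neg_add]
  gcongr
  calc -x⁻¹ ^ n = -|(-1) ^ (n + 1) * x⁻¹ ^ n| := by simp [abs_of_pos hx.1]
    _ ≤ (-1) ^ (n + 1) * x⁻¹ ^ n := neg_abs_le _

lemma u_zero_le_u {n : ℕ} (hn : 2 ≤ n) {x : ℝ} (hx : x ∈ Ico (1 / 2 : ℝ) 1) : u 0 x ≤ u n x := by
  have hx' : x ∈ Ioo (0 : ℝ) 1 := ⟨by linarith [hx.1], hx.2⟩
  have hlower := mul_sub_two_le_pow_sub_pow (inv_mul_inv_one_sub hx') (inv_nonneg.2 hx'.1.le)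
    (inv_le_inv_one_sub hx) (two_le_inv_one_sub hx) hn
  calc u 0 x ≤ (1 - x)⁻¹ - 2 := (u_zero x).trans_le (lam_le_inv_one_sub_sub_two hx')
    _ ≤ ((1 - x)⁻¹ ^ n - x⁻¹ ^ n) / (n * (n + 1)) := by
      rw [le_div_iff₀ (by positivity)]
      linarith
    _ ≤ u n x := pow_sub_pow_div_le_u (by omega) hx'

lemma odd_r (k : ℕ) : Odd (r k) :=
  Nat.odd_iff.2 (by unfold r; omega)

lemma five_le_r (k : ℕ) : 5 ≤ r k :=
  le_max_left _ _

lemma le_r (k : ℕ) : k ≤ r k :=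
  le_max_of_le_right (by omega)

theorem stmt10 (k k' : ℕ) (hk' : k' ≤ k) (x : ℝ) (hx : x ∈ Set.Ico (1 / 2 : ℝ) 1) :
    0 ≤ min (u 0 x) (u 1 x) ∧ min (u 0 x) (u 1 x) ≤ u k' x ∧ u k' x ≤ u (r k) x := by
  have hx' : x ∈ Ioo (0 : ℝ) 1 := ⟨by linarith [hx.1], hx.2⟩
  have hab := inv_le_inv_one_sub hx
  refine ⟨le_min ((u_zero x).symm ▸ lam_nonneg hx) ?_, ?_, ?_⟩
  · refine (div_nonneg ?_ (by positivity)).trans (pow_sub_pow_div_le_u one_ne_zero hx')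
    simpa using hab
  · rcases k' with _ | _ | j
    · exact min_le_left _ _
    · exact min_le_right _ _
    · exact (min_le_left _ _).trans (u_zero_le_u (by omega) hx)
  · rcases eq_or_ne k' 0 with rfl | hk'0
    · exact u_zero_le_u ((five_le_r k).trans' (by norm_num)) hx
    rw [u_eq_majorant (odd_r k) hx']
    exact (u_le_majorant hk'0 hx').trans <| majorant_le_majorant (inv_mul_inv_one_sub hx')
      ((one_le_inv₀ hx'.1).2 hx'.2.le) hab (two_le_inv_one_sub hx) hk'0
      (hk'.trans (le_r k)) (five_le_r k)
end

section
/- Let X be a binomial random variable with parameters n and 1/2, and let d be a positive integer. Then E[(X − n/2)^{2d}] ≤ d^{2d} · (n/4)^d. -/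
/-!
Write `2X - n = ε₁ + ⋯ + εₙ` with independent uniform signs `εᵢ`. Splitting off the last
sign (Pascal's rule) and expanding `(y - 1)^(2d) + (y + 1)^(2d)` into even powers gives, by
induction on `n`, the Gaussian-type bound `𝔼 (2X - n)^(2d) ≤ (2d - 1)‼ nᵈ`; the inductive
step needs `C(2d, 2i) (2i - 1)‼ ≤ (2d - 1)‼ C(d, i)`, which reduces to `2ᵐ m! ≤ (2m)!`.
Dividing by `4ᵈ` and using `(2d - 1)‼ ≤ d^(2d)` finishes the proof.
-/

open Finset Nat

theorem Finset.sum_range_two_mul_add_one_of_odd {M : Type*} [AddCommMonoid M] {g : ℕ → M}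
    (hg : ∀ k, Odd k → g k = 0) (d : ℕ) :
    ∑ k ∈ range (2 * d + 1), g k = ∑ i ∈ range (d + 1), g (2 * i) := by
  induction d with
  | zero => simp
  | succ d ih =>
    rw [show 2 * (d + 1) + 1 = 2 * d + 1 + 1 + 1 by ring, sum_range_succ, sum_range_succ, ih,
      hg (2 * d + 1) (odd_two_mul_add_one d), add_zero, sum_range_succ _ (d + 1)]
    rfl

theorem sub_one_pow_add_add_one_pow_two_mul {R : Type*} [CommRing R] (y : R) (d : ℕ) :
    (y - 1) ^ (2 * d) + (y + 1) ^ (2 * d)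
      = ∑ i ∈ range (d + 1), 2 * ((2 * d).choose (2 * i) : R) * y ^ (2 * i) := by
  rw [sub_pow, add_pow, ← sum_add_distrib, sum_range_two_mul_add_one_of_odd]
  · refine sum_congr rfl fun i _ => ?_
    rw [← mul_add, Even.neg_one_pow ⟨i + d, by ring⟩]
    simp only [one_pow]
    ring
  · intro k hk
    rw [(hk.add_even (even_two_mul d)).neg_one_pow]
    simp only [one_pow]
    ring

-- For `d = 0`, `2 * d - 1` truncates to `0`, and `0‼ = 1` is the right value of `(-1)‼`.
theorem Nat.factorial_two_mul_eq (d : ℕ) : (2 * d)! = 2 ^ d * d ! * (2 * d - 1)‼ := by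
  rcases d with _ | d
  · rfl
  · rw [show 2 * (d + 1) = 2 * d + 1 + 1 by ring, Nat.factorial_eq_mul_doubleFactorial,
      show 2 * d + 1 + 1 = 2 * (d + 1) by ring, Nat.doubleFactorial_two_mul,
      show 2 * (d + 1) - 1 = 2 * d + 1 by omega]

theorem Nat.doubleFactorial_two_mul_sub_one_le (d : ℕ) : (2 * d - 1)‼ ≤ d ^ (2 * d) := by
  induction d with
  | zero => rfl
  | succ d ih =>
    rw [show 2 * (d + 1) - 1 = 2 * d + 1 by omega, Nat.doubleFactorial_add_one,
      show 2 * (d + 1) = 2 + 2 * d by ring, pow_add]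
    gcongr
    · nlinarith
    · exact ih.trans (Nat.pow_le_pow_left d.le_succ _)

theorem Nat.choose_two_mul_mul_doubleFactorial_le {i d : ℕ} (h : i ≤ d) :
    (2 * d).choose (2 * i) * (2 * i - 1)‼ ≤ (2 * d - 1)‼ * d.choose i := by
  obtain ⟨m, rfl⟩ := Nat.exists_eq_add_of_le h
  have hchoose_two_mul :
      (2 * (i + m)).choose (2 * i) * (2 * i)! * (2 * m)! = (2 * (i + m))! := by
    simpa [show 2 * (i + m) - 2 * i = 2 * m by omega] using
      Nat.choose_mul_factorial_mul_factorial (show 2 * i ≤ 2 * (i + m) by omega)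
  have hchoose : (i + m).choose i * i ! * m ! = (i + m)! := by
    simpa using Nat.choose_mul_factorial_mul_factorial (Nat.le_add_right i m)
  refine Nat.le_of_mul_le_mul_right (c := 2 ^ i * i ! * (2 * m)! * (2 * m)‼) ?_
    (by positivity)
  calc _ = (2 * (i + m))! * (2 * m)‼ := by
        rw [← hchoose_two_mul, factorial_two_mul_eq i]; ring
    _ ≤ (2 * (i + m))! * (2 * m)! := Nat.mul_le_mul_left _ (doubleFactorial_le_factorial _)
    _ = _ := by
        rw [doubleFactorial_two_mul, factorial_two_mul_eq (i + m), ← hchoose, pow_add]; ring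

/-- `rademacherSum n g = 2 ^ n * 𝔼 g(ε₁ + ⋯ + εₙ)` for independent uniform signs `εᵢ`,
i.e. `2 ^ n * 𝔼 g(2X - n)` for `X ∼ Binomial(n, 1/2)`. -/
noncomputable def rademacherSum (n : ℕ) (g : ℝ → ℝ) : ℝ :=
  ∑ j ∈ range (n + 1), (n.choose j : ℝ) * g (2 * j - n)

theorem rademacherSum_succ (n : ℕ) (g : ℝ → ℝ) :
    rademacherSum (n + 1) g =
      rademacherSum n (fun y => g (y - 1)) + rademacherSum n (fun y => g (y + 1)) := by
  rw [rademacherSum, sum_choose_succ_mul (fun i _ => g (2 * i - (n + 1 : ℕ))) n]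
  push_cast
  congr 1 <;> refine sum_congr rfl fun j _ => ?_ <;> ring_nf

theorem rademacherSum_sum_mul {ι : Type*} (s : Finset ι) (c : ι → ℝ) (g : ι → ℝ → ℝ)
    (n : ℕ) :
    rademacherSum n (fun y => ∑ i ∈ s, c i * g i y) =
      ∑ i ∈ s, c i * rademacherSum n (g i) := by
  simp only [rademacherSum, mul_sum, sum_comm (s := range (n + 1))]
  exact sum_congr rfl fun i _ => sum_congr rfl fun j _ => by ring

theorem rademacherSum_add (n : ℕ) (f g : ℝ → ℝ) :
    rademacherSum n (fun y => f y + g y) = rademacherSum n f + rademacherSum n g := by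
  simp only [rademacherSum, mul_add, sum_add_distrib]

theorem rademacherSum_pow_two_mul_le (n d : ℕ) :
    rademacherSum n (· ^ (2 * d)) ≤ (2 * d - 1)‼ * n ^ d * 2 ^ n := by
  induction n generalizing d with
  | zero =>
    simp only [rademacherSum, zero_add, sum_range_one, Nat.choose_self, Nat.cast_zero,
      Nat.cast_one, mul_zero, sub_zero, pow_zero, one_mul, mul_one, pow_mul,
      zero_pow two_ne_zero]
    exact le_mul_of_one_le_left (by positivity) (Nat.one_le_cast.mpr (doubleFactorial_pos _))
  | succ n ih =>
    have hterm (i : ℕ) (hi : i ∈ range (d + 1)) :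
        2 * ((2 * d).choose (2 * i) : ℝ) * rademacherSum n (· ^ (2 * i))
          ≤ (2 * d - 1)‼ * d.choose i * (2 * n ^ i * 2 ^ n) :=
      calc 2 * ((2 * d).choose (2 * i) : ℝ) * rademacherSum n (· ^ (2 * i))
          ≤ 2 * ((2 * d).choose (2 * i) : ℝ) * ((2 * i - 1)‼ * n ^ i * 2 ^ n) := by
            gcongr; exact ih i
        _ = ((2 * d).choose (2 * i) * (2 * i - 1)‼ : ℕ) * (2 * n ^ i * 2 ^ n) := by
            push_cast; ring
        _ ≤ ((2 * d - 1)‼ * d.choose i : ℕ) * (2 * n ^ i * 2 ^ n) := by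
            refine mul_le_mul_of_nonneg_right ?_ (by positivity)
            exact_mod_cast choose_two_mul_mul_doubleFactorial_le (le_of_lt_succ (mem_range.mp hi))
        _ = _ := by push_cast; ring
    calc rademacherSum (n + 1) (· ^ (2 * d))
        = ∑ i ∈ range (d + 1),
            2 * ((2 * d).choose (2 * i) : ℝ) * rademacherSum n (· ^ (2 * i)) := by
          rw [rademacherSum_succ, ← rademacherSum_add]
          simp_rw [sub_one_pow_add_add_one_pow_two_mul]
          exact rademacherSum_sum_mul _ _ _ n
      _ ≤ ∑ i ∈ range (d + 1), ((2 * d - 1)‼ : ℝ) * d.choose i * (2 * n ^ i * 2 ^ n) :=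
          sum_le_sum hterm
      _ = (2 * d - 1)‼ * ((n + 1 : ℕ) : ℝ) ^ d * 2 ^ (n + 1) := by
          rw [Nat.cast_succ, add_pow, mul_sum, sum_mul]
          exact sum_congr rfl fun i _ => by ring

theorem sum_choose_div_two_pow_mul_sub_half_pow (n k : ℕ) :
    ∑ j ∈ range (n + 1), ((n.choose j : ℝ) / 2 ^ n) * ((j : ℝ) - n / 2) ^ k
      = rademacherSum n (· ^ k) / 2 ^ (n + k) := by
  rw [rademacherSum, sum_div]
  refine sum_congr rfl fun j _ => ?_
  rw [show (j : ℝ) - n / 2 = (2 * j - n) / 2 by ring, div_pow, pow_add]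
  field_simp

theorem stmt16_general (n d : ℕ) :
    ∑ j ∈ Finset.range (n + 1),
        ((n.choose j : ℝ) / 2 ^ n) * ((j : ℝ) - (n : ℝ) / 2) ^ (2 * d)
      ≤ (d : ℝ) ^ (2 * d) * ((n : ℝ) / 4) ^ d := by
  rw [sum_choose_div_two_pow_mul_sub_half_pow]
  calc rademacherSum n (· ^ (2 * d)) / 2 ^ (n + 2 * d)
      ≤ (2 * d - 1)‼ * n ^ d * 2 ^ n / 2 ^ (n + 2 * d) := by
        gcongr; exact rademacherSum_pow_two_mul_le n d
    _ = (2 * d - 1)‼ * (n / 4) ^ d := by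
        rw [pow_add, pow_mul, div_pow]; field_simp; norm_num
    _ ≤ d ^ (2 * d) * (n / 4) ^ d := by
        gcongr; exact_mod_cast Nat.doubleFactorial_two_mul_sub_one_le d

/-- For X ∼ Binomial(n, 1/2) and d ≥ 1, E[(X − n/2)^{2d}] ≤ d^{2d}·(n/4)^d.
The expectation is written as an explicit sum against the binomial weights. -/
theorem stmt16 (n d : ℕ) (hd : 1 ≤ d) :
    ∑ j ∈ Finset.range (n + 1),
        ((n.choose j : ℝ) / 2 ^ n) * ((j : ℝ) - (n : ℝ) / 2) ^ (2 * d)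
      ≤ (d : ℝ) ^ (2 * d) * ((n : ℝ) / 4) ^ d :=
  stmt16_general n d
end

section
/- Let n ∈ ℕ with n ≥ 1, let X ∼ Binomial(n, 1/2), and let p ∈ (0,1]. Then E[p·(X/n)·log₂(p·X/n) + p·(1−X/n)·log₂(p·(1−X/n)) − p·log₂(p/2)] = 1·p − p·log₂(p/2) + p·log₂(p) + p·2^{1−n}·∑_{j=0}^{n} C(n,j)·(j/n)·log₂(j/n); equivalently, in the full-information setting with probability vector (pᵢ) and nᵢ = n·pᵢ observations per prefix, E[Î^{L+1} | ℰ] = 1 + ∑_{i=1}^{2^L} pᵢ·2^{1−nᵢ}·∑_{j=0}^{nᵢ} C(nᵢ,j)·(j/nᵢ)·log₂(j/nᵢ). -/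
open Real Finset

/-
The identity holds prefix by prefix. Writing t = j/n, the scaling rule
(q t) log(q t) = t · q log q + q · t log t splits each binomial average into
q log₂ q (the binomial weights sum to 1) plus q times the averages of t log₂ t and of
(1 - t) log₂ (1 - t). The symmetry C(n, j) = C(n, n - j) makes these two averages
equal, which produces the factor 2 · 2^{-n}, while q log₂ (q / 2) = q log₂ q - q
contributes the constant q; summing q = pᵢ over the prefixes gives the leading 1.
-/

lemma Real.mul_logb_mul (b x y : ℝ) :
    x * y * logb b (x * y) = y * (x * logb b x) + x * (y * logb b y) := by
  have h := negMulLog_mul x y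
  simp only [negMulLog, logb] at h ⊢
  linear_combination -h / log b

lemma Real.mul_logb_div_two {q : ℝ} (hq : q ≠ 0) :
    q * logb 2 (q / 2) = q * logb 2 q - q := by
  rw [logb_div hq two_ne_zero, logb_self_eq_one one_lt_two]
  ring

lemma sum_range_choose_mul_one_sub_div {R : Type*} [AddCommMonoid R] [Module ℝ R]
    {m : ℕ} (hm : m ≠ 0) (g : ℝ → R) :
    ∑ j ∈ range (m + 1), (m.choose j : ℝ) • g (1 - j / m)
      = ∑ j ∈ range (m + 1), (m.choose j : ℝ) • g (j / m) := by
  rw [← sum_range_reflect]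
  refine sum_congr rfl fun j hj => ?_
  have hjm : j ≤ m := Nat.lt_succ_iff.mp (mem_range.mp hj)
  rw [Nat.add_sub_cancel, Nat.choose_symm hjm, Nat.cast_sub hjm]
  congr 2
  field_simp
  ring

lemma binomial_average_mul_logb {m : ℕ} (hm : m ≠ 0) {q : ℝ} (hq : q ≠ 0) :
    -q * logb 2 (q / 2)
        + ∑ j ∈ range (m + 1),
            ((m.choose j : ℝ) / 2 ^ m) *
              (q * ((j : ℝ) / m) * logb 2 (q * ((j : ℝ) / m))
                + q * (1 - (j : ℝ) / m) * logb 2 (q * (1 - (j : ℝ) / m)))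
      = q + q * (2 : ℝ) ^ (1 - (m : ℤ)) *
          ∑ j ∈ range (m + 1), (m.choose j : ℝ) * ((j : ℝ) / m) * logb 2 ((j : ℝ) / m) := by
  set g : ℝ → ℝ := fun x => x * logb 2 x with hg
  have hsplit : ∀ j ∈ range (m + 1),
      ((m.choose j : ℝ) / 2 ^ m) *
          (q * ((j : ℝ) / m) * logb 2 (q * ((j : ℝ) / m))
            + q * (1 - (j : ℝ) / m) * logb 2 (q * (1 - (j : ℝ) / m)))
        = (m.choose j : ℝ) * (g q / 2 ^ m)
          + q / 2 ^ m * ((m.choose j : ℝ) • g (j / m) + (m.choose j : ℝ) • g (1 - j / m)) := by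
    intro j _
    rw [mul_logb_mul, mul_logb_mul, hg, smul_eq_mul, smul_eq_mul]
    ring
  have hsymm := sum_range_choose_mul_one_sub_div hm g
  have hchoose : ∑ j ∈ range (m + 1), (m.choose j : ℝ) = 2 ^ m := by
    exact_mod_cast Nat.sum_range_choose m
  rw [sum_congr rfl hsplit, sum_add_distrib, ← sum_mul, ← mul_sum, sum_add_distrib, hsymm,
    hchoose, neg_mul, mul_logb_div_two hq,
    zpow_sub₀ two_ne_zero, zpow_one, zpow_natCast]
  simp only [hg, smul_eq_mul, mul_assoc]
  field_simp
  ring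

theorem stmt17_general (L : ℕ) (p : Fin (2 ^ L) → ℝ)
    (hp : ∀ i, 0 < p i) (hsum : ∑ i, p i = 1)
    (n : Fin (2 ^ L) → ℕ) (hn : ∀ i, 1 ≤ n i) :
    ∑ i, (-(p i) * logb 2 (p i / 2)
        + ∑ j ∈ Finset.range (n i + 1),
            (((n i).choose j : ℝ) / 2 ^ (n i)) *
              (p i * ((j : ℝ) / (n i : ℝ)) * logb 2 (p i * ((j : ℝ) / (n i : ℝ)))
                + p i * (1 - (j : ℝ) / (n i : ℝ)) *
                    logb 2 (p i * (1 - (j : ℝ) / (n i : ℝ)))))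
      = 1 + ∑ i, p i * (2 : ℝ) ^ (1 - (n i : ℤ)) *
          ∑ j ∈ Finset.range (n i + 1),
            ((n i).choose j : ℝ) * ((j : ℝ) / (n i : ℝ)) * logb 2 ((j : ℝ) / (n i : ℝ)) := by
  rw [sum_congr rfl fun i _ =>
      binomial_average_mul_logb (Nat.one_le_iff_ne_zero.mp (hn i)) (hp i).ne',
    sum_add_distrib, hsum]

/-- Expected value of the plug-in market-information estimator under the
EMH conditioning ℰ: each prefix `i` has known probability `p i`, `n i`
observed suffixes whose count of 1's is Binomial(n i, 1/2), so that
E[Î^{L+1} | ℰ] = 1 + ∑ᵢ pᵢ 2^{1−nᵢ} ∑ⱼ C(nᵢ,j)(j/nᵢ)log₂(j/nᵢ).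
The conditional expectation is written as an explicit sum against binomial
weights; the convention 0·log₂0 = 0 is automatic since `Real.logb 2 0 = 0`. -/
theorem stmt17 (L : ℕ) (hL : 0 < L) (p : Fin (2 ^ L) → ℝ)
    (hp : ∀ i, 0 < p i) (hp1 : ∀ i, p i ≤ 1) (hsum : ∑ i, p i = 1)
    (n : Fin (2 ^ L) → ℕ) (hn : ∀ i, 1 ≤ n i) :
    ∑ i, (-(p i) * logb 2 (p i / 2)
        + ∑ j ∈ Finset.range (n i + 1),
            (((n i).choose j : ℝ) / 2 ^ (n i)) *
              (p i * ((j : ℝ) / (n i : ℝ)) * logb 2 (p i * ((j : ℝ) / (n i : ℝ)))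
                + p i * (1 - (j : ℝ) / (n i : ℝ)) *
                    logb 2 (p i * (1 - (j : ℝ) / (n i : ℝ)))))
      = 1 + ∑ i, p i * (2 : ℝ) ^ (1 - (n i : ℤ)) *
          ∑ j ∈ Finset.range (n i + 1),
            ((n i).choose j : ℝ) * ((j : ℝ) / (n i : ℝ)) * logb 2 ((j : ℝ) / (n i : ℝ)) :=
  stmt17_general L p hp hsum n hn
end
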